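/- arXiv:1511.05523 — 3 statements merged into one kernel-verified Lean document; each statement's English description precedes it below -/
import Mathlib

section
/- Let p be an odd prime, χ the Legendre symbol mod p, and let N := n1(p) be the least positive nonresidue. For every real x with N ≤ x < N^3, every positive integer n ≤ x with χ(n) = −1 can be written uniquely as n = q·m where q is a prime with χ(q) = −1 and m is a positive integer with χ(m) = 1 and m ≤ x/q. -/
lemma legendreSym_list_prod (p : ℕ) [Fact p.Prime] (L : List ℕ) :
    legendreSym p ((L.prod : ℕ) : ℤ) = (L.map (fun q : ℕ => legendreSym p (q : ℤ))).prod := by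
  induction L with
  | nil => simp
  | cons a t ih =>
      have h : ((((a :: t).prod : ℕ)) : ℤ) = (a : ℤ) * ((t.prod : ℕ) : ℤ) := by
        rw [List.prod_cons, Nat.cast_mul]
      rw [h, legendreSym.mul, ih, List.map_cons, List.prod_cons]

theorem nonresidue_unique_factorization (p : ℕ) [Fact p.Prime] (hp : p ≠ 2)
    (N : ℕ) (hN : N = sInf {n : ℕ | 0 < n ∧ legendreSym p (n : ℤ) = -1})
    (x : ℝ) (hx1 : (N : ℝ) ≤ x) (hx2 : x < (N : ℝ) ^ 3) :
    ∀ n : ℕ, 0 < n → (n : ℝ) ≤ x → legendreSym p (n : ℤ) = -1 →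
      ∃! qm : ℕ × ℕ, qm.1.Prime ∧ legendreSym p (qm.1 : ℤ) = -1 ∧
        0 < qm.2 ∧ legendreSym p (qm.2 : ℤ) = 1 ∧ (qm.2 : ℝ) ≤ x / qm.1 ∧
        n = qm.1 * qm.2 := by
  intro n hn hnx hχn
  set χ : ℕ → ℤ := fun q : ℕ => legendreSym p (q : ℤ) with hχ
  have hn0 : n ≠ 0 := hn.ne'
  have hN1 : 1 ≤ N := by
    by_contra h
    push_neg at h
    interval_cases N
    · push_cast at hx1 hx2; linarith
  -- the multiset of prime factors
  set M : Multiset ℕ := (n.primeFactorsList : Multiset ℕ) with hM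
  have hMprod : M.prod = n := by
    simpa [hM] using Nat.prod_primeFactorsList hn0
  have hmemM : ∀ q, q ∈ M ↔ q.Prime ∧ q ∣ n := by
    intro q
    simpa [hM] using Nat.mem_primeFactorsList hn0
  have hnzero : (n : ZMod p) ≠ 0 := by
    intro h
    have h2 : legendreSym p (n : ℤ) = 0 := by
      rw [legendreSym.eq_zero_iff]; push_cast; exact h
    rw [h2] at hχn; norm_num at hχn
  have hval : ∀ q ∈ M, χ q = 1 ∨ χ q = -1 := by
    intro q hq
    apply legendreSym.eq_one_or_neg_one
    rcases (hmemM q).1 hq with ⟨hqp, hqd⟩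
    push_cast
    intro h
    apply hnzero
    have hpq : p ∣ q := (ZMod.natCast_eq_zero_iff q p).1 h
    have hpn : p ∣ n := hpq.trans hqd
    exact (ZMod.natCast_eq_zero_iff n p).2 hpn
  -- product of χ over factors = χ(n) = -1
  have hprodχ : (M.map χ).prod = -1 := by
    have h := legendreSym_list_prod p n.primeFactorsList
    rw [Nat.prod_primeFactorsList hn0] at h
    rw [← hχn, h, hM, hχ]
    rfl
  classical
  set F : Multiset ℕ := M.filter (fun q => χ q = -1) with hF
  set G : Multiset ℕ := M.filter (fun q => ¬ χ q = -1) with hG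
  have hFG : F + G = M := Multiset.filter_add_not _ M
  have hFprodχ : (F.map χ).prod = (-1 : ℤ) ^ Multiset.card F := by
    have hrep : F.map χ = Multiset.replicate (Multiset.card (F.map χ)) (-1 : ℤ) := by
      apply Multiset.eq_replicate_card.2
      intro z hz
      rcases Multiset.mem_map.1 hz with ⟨q, hq, rfl⟩
      exact (Multiset.mem_filter.1 hq).2
    rw [hrep, Multiset.prod_replicate, Multiset.card_map]
  have hGprodχ : (G.map χ).prod = 1 := by
    apply Multiset.prod_eq_one
    intro z hz
    rcases Multiset.mem_map.1 hz with ⟨q, hq, rfl⟩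
    rcases Multiset.mem_filter.1 hq with ⟨hqM, hq1⟩
    rcases hval q hqM with h | h
    · exact h
    · exact absurd h hq1
  have hk : (-1 : ℤ) ^ Multiset.card F = -1 := by
    have h : (M.map χ).prod = (-1 : ℤ) ^ Multiset.card F * 1 := by
      rw [← hFG, Multiset.map_add, Multiset.prod_add, hFprodχ, hGprodχ]
    rw [hprodχ] at h
    linarith [h]
  have hkodd : Odd (Multiset.card F) := by
    by_contra h
    rw [Nat.not_odd_iff_even] at h
    rw [h.neg_one_pow] at hk
    norm_num at hk
  have hFge : ∀ q ∈ F, N ≤ q := by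
    intro q hq
    rcases Multiset.mem_filter.1 hq with ⟨hqM, hq1⟩
    have hqpos : 0 < q := ((hmemM q).1 hqM).1.pos
    rw [hN]
    exact Nat.sInf_le ⟨hqpos, hq1⟩
  have hFdvd : F.prod ∣ n := by
    rw [← hMprod]
    exact Multiset.prod_dvd_prod_of_le (Multiset.filter_le _ M)
  have hcard : Multiset.card F = 1 := by
    by_contra h
    have h3 : 3 ≤ Multiset.card F := by
      rcases hkodd with ⟨j, hj⟩
      omega
    have h1 : N ^ 3 ≤ N ^ Multiset.card F := Nat.pow_le_pow_right hN1 h3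
    have h2 : N ^ Multiset.card F ≤ F.prod := Multiset.pow_card_le_prod hFge
    have h4 : F.prod ≤ n := Nat.le_of_dvd hn hFdvd
    have h5 : (N : ℝ) ^ 3 ≤ (n : ℝ) := by
      have : N ^ 3 ≤ n := le_trans h1 (le_trans h2 h4)
      exact_mod_cast this
    linarith
  rcases Multiset.card_eq_one.1 hcard with ⟨q, hFq⟩
  have hqF : q ∈ F := by rw [hFq]; exact Multiset.mem_singleton_self q
  rcases Multiset.mem_filter.1 hqF with ⟨hqM, hqχ⟩
  rcases (hmemM q).1 hqM with ⟨hqprime, hqdvd⟩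
  set m : ℕ := n / q with hm
  have hqm : n = q * m := (Nat.mul_div_cancel' hqdvd).symm
  have hmpos : 0 < m := Nat.div_pos (Nat.le_of_dvd hn hqdvd) hqprime.pos
  have hqpos : 0 < q := hqprime.pos
  have hχm : χ m = 1 := by
    have h1 : legendreSym p (n : ℤ) = legendreSym p (q : ℤ) * legendreSym p (m : ℤ) := by
      rw [hqm]
      push_cast
      exact legendreSym.mul p (q : ℤ) (m : ℤ)
    have hqχ' : legendreSym p (q : ℤ) = -1 := hqχ
    rw [hχn, hqχ'] at h1
    have : legendreSym p (m : ℤ) = 1 := by linarith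
    exact this
  have hmle : (m : ℝ) ≤ x / q := by
    rw [le_div_iff₀ (by exact_mod_cast hqpos : (0:ℝ) < (q:ℝ))]
    have h : ((m * q : ℕ) : ℝ) ≤ x := by
      rw [mul_comm m q, ← hqm]; exact hnx
    exact_mod_cast h
  refine ⟨(q, m), ⟨hqprime, hqχ, hmpos, hχm, hmle, hqm⟩, ?_⟩
  rintro ⟨q', m'⟩ ⟨hq'p, hq'χ, hm'pos, _, _, hqm'⟩
  have hq'dvd : q' ∣ n := ⟨m', hqm'⟩
  have hq'F : q' ∈ F := Multiset.mem_filter.2 ⟨(hmemM q').2 ⟨hq'p, hq'dvd⟩, hq'χ⟩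
  rw [hFq, Multiset.mem_singleton] at hq'F
  subst hq'F
  have hm' : m' = m := by
    have h : q' * m' = q' * m := by rw [← hqm', ← hqm]
    exact Nat.eq_of_mul_eq_mul_left hq'p.pos h
  simp [hm']
end

section
/- The real number δ1 := 1 − 2·log(1 + √e) + 4·∫_1^{√e} (log u)/(u+1) du satisfies −0.657 < δ1 < −0.656. -/
/-!
Substituting `u = exp t` and integrating by parts turns `δ₁` into
`1 - 4 ∫₀^{1/2} log (1 + exp t) dt`, and `log (1 + exp t) = log 2 + t / 2 + log (cosh (t / 2))`.
It remains to squeeze `log (cosh x)` on `[0, 1/4]` between polynomials, from the Taylor bounds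
of `cosh` and of `log (1 + w)`. The lower bound on `δ₁` has a margin of only about `10⁻⁶`, so
the upper polynomial must carry the exact quartic term `-x⁴/12` of `log (cosh x)`.
-/

open Real Set MeasureTheory

lemma sub_sq_div_two_le_log_one_add {w : ℝ} (hw : 0 ≤ w) : w - w ^ 2 / 2 ≤ log (1 + w) := by
  refine le_trans ?_ (le_log_one_add_of_nonneg hw)
  rw [le_div_iff₀ (by linarith)]
  nlinarith [pow_nonneg hw 3]

lemma log_one_add_le_sub_sq_div_two_add_cube_div_three {w : ℝ} (hw : 0 ≤ w) :
    log (1 + w) ≤ w - w ^ 2 / 2 + w ^ 3 / 3 := by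
  let g : ℝ → ℝ := fun y ↦ y - y ^ 2 / 2 + y ^ 3 / 3 - log (1 + y)
  have hg : ∀ y ∈ Ici (0 : ℝ), HasDerivAt g (y ^ 3 / (1 + y)) y := fun y hy ↦ by
    have hy : 0 < 1 + y := by simp only [mem_Ici] at hy; linarith
    have hlog := ((hasDerivAt_id y).const_add 1).log hy.ne'
    refine ((((hasDerivAt_id y).sub ((hasDerivAt_pow 2 y).div_const 2)).add
      ((hasDerivAt_pow 3 y).div_const 3)).sub hlog).congr_deriv ?_
    simp only [id]
    field_simp
    ring
  have hmono : MonotoneOn g (Ici 0) :=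
    monotoneOn_of_hasDerivWithinAt_nonneg (convex_Ici 0)
      (fun y hy ↦ (hg y hy).continuousAt.continuousWithinAt)
      (fun y hy ↦ (hg y (interior_subset hy)).hasDerivWithinAt)
      (fun y hy ↦ by
        rw [interior_Ici] at hy
        exact div_nonneg (pow_nonneg hy.out.le 3) (by linarith [hy.out]))
  simpa [g] using hmono self_mem_Ici hw hw

lemma one_add_sq_div_two_le_cosh (x : ℝ) : 1 + x ^ 2 / 2 ≤ cosh x := by
  have := sum_le_hasSum (Finset.range 2) (fun i _ ↦ by rw [pow_mul]; positivity) (hasSum_cosh x)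
  simpa [Finset.sum_range_succ] using this

lemma cosh_le_of_abs_le_one {x : ℝ} (hx : |x| ≤ 1) :
    cosh x ≤ 1 + x ^ 2 / 2 + x ^ 4 / 24 + x ^ 6 / 600 := by
  have h6 : |x| ^ 6 = x ^ 6 := by rw [pow_abs, abs_of_nonneg (by positivity)]
  have hpos := exp_bound hx (n := 6) (by norm_num)
  have hneg := exp_bound (x := -x) (by rwa [abs_neg]) (n := 6) (by norm_num)
  rw [abs_neg, h6] at hneg
  rw [h6] at hpos
  norm_num [abs_le, Finset.sum_range_succ, Nat.factorial] at hpos hneg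
  rw [cosh_eq]
  linarith [hpos.2, hneg.2]

lemma sq_div_two_sub_le_log_cosh {x : ℝ} (hx : |x| ≤ 1) :
    x ^ 2 / 2 - x ^ 4 / 8 ≤ log (cosh x) := by
  obtain ⟨w, hw⟩ : ∃ w, cosh x = 1 + w := ⟨cosh x - 1, by ring⟩
  have hlo : x ^ 2 / 2 ≤ w := by linarith [one_add_sq_div_two_le_cosh x]
  have hhi : w ≤ 1 := by
    have hx2 : x ^ 2 ≤ 1 := by nlinarith [sq_abs x, abs_nonneg x]
    have := cosh_le_of_abs_le_one hx
    nlinarith [pow_le_one₀ (sq_nonneg x) hx2 (n := 2), pow_le_one₀ (sq_nonneg x) hx2 (n := 3)]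
  have hlog := sub_sq_div_two_le_log_one_add (hlo.trans' (by positivity))
  rw [hw]
  -- `w ↦ w - w ^ 2 / 2` is increasing on `[0, 1]`
  nlinarith [mul_nonneg (sub_nonneg.2 hlo) (by linarith : 0 ≤ 2 - w - x ^ 2 / 2)]

lemma log_cosh_le_of_abs_le {x : ℝ} (hx : |x| ≤ 1 / 4) :
    log (cosh x) ≤ x ^ 2 / 2 - x ^ 4 / 12 + x ^ 6 / 32 := by
  obtain ⟨w, hw⟩ : ∃ w, cosh x = 1 + w := ⟨cosh x - 1, by ring⟩
  have hx2 : x ^ 2 ≤ 1 / 16 := by nlinarith [sq_abs x, abs_nonneg x]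
  have hlo : 0 ≤ w := by linarith [one_add_sq_div_two_le_cosh x, sq_nonneg x]
  have hhi := cosh_le_of_abs_le_one (hx.trans (by norm_num))
  have hlog := log_one_add_le_sub_sq_div_two_add_cube_div_three hlo
  rw [hw] at hhi ⊢
  set W := x ^ 2 / 2 + x ^ 4 / 24 + x ^ 6 / 600 with hWdef
  have hwW : w ≤ W := by rw [hWdef]; linarith
  have hW : W ≤ 1 := by
    rw [hWdef]
    have : x ^ 4 ≤ 1 / 256 := by nlinarith [sq_nonneg x]
    have : x ^ 6 ≤ 1 / 4096 := by nlinarith [sq_nonneg x, pow_nonneg (sq_nonneg x) 2]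
    linarith
  -- `w ↦ w - w ^ 2 / 2 + w ^ 3 / 3` is increasing
  have hmono : w - w ^ 2 / 2 + w ^ 3 / 3 ≤ W - W ^ 2 / 2 + W ^ 3 / 3 := by
    nlinarith [mul_nonneg (sub_nonneg.2 hwW)
      (by nlinarith : 0 ≤ 1 - (W + w) / 2 + (W ^ 2 + W * w + w ^ 2) / 3)]
  have hpoly : W - W ^ 2 / 2 + W ^ 3 / 3 ≤ x ^ 2 / 2 - x ^ 4 / 12 + x ^ 6 / 32 := by
    obtain ⟨y, hy⟩ : ∃ y, x ^ 2 = y := ⟨_, rfl⟩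
    have hy0 : 0 ≤ y := hy ▸ sq_nonneg x
    have h4 : x ^ 4 = y ^ 2 := by rw [← hy]; ring
    have h6 : x ^ 6 = y ^ 3 := by rw [← hy]; ring
    simp only [W, hy, h4, h6]
    rw [hy] at hx2
    nlinarith [pow_nonneg hy0 3, pow_nonneg hy0 4, mul_nonneg (pow_nonneg hy0 3) (sub_nonneg.2 hx2)]
  linarith

lemma log_one_add_exp_eq (t : ℝ) : log (1 + exp t) = log 2 + t / 2 + log (cosh (t / 2)) := by
  have h : 1 + exp t = 2 * exp (t / 2) * cosh (t / 2) := by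
    have hsq : exp t = exp (t / 2) * exp (t / 2) := by rw [← exp_add, add_halves]
    have hinv : exp (t / 2) * exp (-(t / 2)) = 1 := by rw [← exp_add, add_neg_cancel, exp_zero]
    rw [cosh_eq]
    linear_combination hsq - hinv
  rw [h, log_mul (by positivity) (cosh_pos _).ne', log_mul two_ne_zero (exp_ne_zero _), log_exp]

lemma one_add_exp_ne_zero (t : ℝ) : 1 + exp t ≠ 0 := by positivity

lemma integral_log_div_add_one_eq (a b : ℝ) :
    ∫ u in exp a..exp b, log u / (u + 1) =
      b * log (1 + exp b) - a * log (1 + exp a) - ∫ t in a..b, log (1 + exp t) := by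
  have hv : ∀ t, HasDerivAt (fun t ↦ log (1 + exp t)) (exp t / (1 + exp t)) t := fun t ↦
    ((hasDerivAt_exp t).const_add 1).log (one_add_exp_ne_zero t)
  have hsubst :
      ∫ t in a..b, t * (exp t / (1 + exp t)) = ∫ u in exp a..exp b, log u / (u + 1) := by
    rw [← intervalIntegral.integral_comp_mul_deriv' (fun t _ ↦ hasDerivAt_exp t)
      continuousOn_exp]
    · refine intervalIntegral.integral_congr fun t _ ↦ ?_
      simp only [Function.comp, log_exp]
      ring
    · refine ContinuousOn.div (continuousOn_log.mono ?_) (by fun_prop) fun u hu ↦ ?_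
      · rintro _ ⟨t, -, rfl⟩; exact (exp_pos t).ne'
      · obtain ⟨t, -, rfl⟩ := hu; positivity
  rw [← hsubst, intervalIntegral.integral_mul_deriv_eq_deriv_mul (fun t _ ↦ hasDerivAt_id' t)
    (fun t _ ↦ hv t) intervalIntegrable_const
    ((continuous_exp.div (by fun_prop) one_add_exp_ne_zero).intervalIntegrable _ _)]
  simp

lemma intervalIntegrable_log_one_add_exp (a b : ℝ) :
    IntervalIntegrable (fun t ↦ log (1 + exp t)) volume a b :=
  ((continuous_const.add continuous_exp).log one_add_exp_ne_zero).intervalIntegrable _ _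

lemma le_integral_log_one_add_exp :
    log 2 / 2 + 1 / 16 + 1 / 192 - 1 / 20480 ≤ ∫ t in (0 : ℝ)..1 / 2, log (1 + exp t) := by
  have hP : ∀ t, HasDerivAt (fun t ↦ log 2 * t + t ^ 2 / 4 + t ^ 3 / 24 - t ^ 5 / 640)
      (log 2 + t / 2 + ((t / 2) ^ 2 / 2 - (t / 2) ^ 4 / 8)) t := fun t ↦ by
    refine ((((hasDerivAt_id t).const_mul (log 2)).add ((hasDerivAt_pow 2 t).div_const 4)).add
      ((hasDerivAt_pow 3 t).div_const 24)).sub ((hasDerivAt_pow 5 t).div_const 640)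
      |>.congr_deriv ?_
    push_cast
    ring
  calc log 2 / 2 + 1 / 16 + 1 / 192 - 1 / 20480
      = ∫ t in (0 : ℝ)..1 / 2, (log 2 + t / 2 + ((t / 2) ^ 2 / 2 - (t / 2) ^ 4 / 8)) := by
        rw [intervalIntegral.integral_eq_sub_of_hasDerivAt (fun t _ ↦ hP t)
          (Continuous.intervalIntegrable (by fun_prop) _ _)]
        ring
    _ ≤ _ := intervalIntegral.integral_mono_on (by norm_num)
        (Continuous.intervalIntegrable (by fun_prop) _ _)
        (intervalIntegrable_log_one_add_exp _ _) fun t ht ↦ by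
          have hx : |t / 2| ≤ 1 := by rw [abs_le]; constructor <;> linarith [ht.1, ht.2]
          rw [log_one_add_exp_eq]
          linarith [sq_div_two_sub_le_log_cosh hx]

lemma integral_log_one_add_exp_le :
    ∫ t in (0 : ℝ)..1 / 2, log (1 + exp t) ≤
      log 2 / 2 + 1 / 16 + 1 / 192 - 1 / 30720 + 1 / 1835008 := by
  have hP : ∀ t, HasDerivAt
      (fun t ↦ log 2 * t + t ^ 2 / 4 + t ^ 3 / 24 - t ^ 5 / 960 + t ^ 7 / 14336)
      (log 2 + t / 2 + ((t / 2) ^ 2 / 2 - (t / 2) ^ 4 / 12 + (t / 2) ^ 6 / 32)) t := fun t ↦ by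
    refine (((((hasDerivAt_id t).const_mul (log 2)).add ((hasDerivAt_pow 2 t).div_const 4)).add
      ((hasDerivAt_pow 3 t).div_const 24)).sub ((hasDerivAt_pow 5 t).div_const 960)).add
      ((hasDerivAt_pow 7 t).div_const 14336) |>.congr_deriv ?_
    push_cast
    ring
  calc ∫ t in (0 : ℝ)..1 / 2, log (1 + exp t)
      ≤ ∫ t in (0 : ℝ)..1 / 2,
          (log 2 + t / 2 + ((t / 2) ^ 2 / 2 - (t / 2) ^ 4 / 12 + (t / 2) ^ 6 / 32)) :=
        intervalIntegral.integral_mono_on (by norm_num) (intervalIntegrable_log_one_add_exp _ _)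
          (Continuous.intervalIntegrable (by fun_prop) _ _) fun t ht ↦ by
            have hx : |t / 2| ≤ 1 / 4 := by rw [abs_le]; constructor <;> linarith [ht.1, ht.2]
            rw [log_one_add_exp_eq]
            linarith [log_cosh_le_of_abs_le hx]
    _ = _ := by
        rw [intervalIntegral.integral_eq_sub_of_hasDerivAt (fun t _ ↦ hP t)
          (Continuous.intervalIntegrable (by fun_prop) _ _)]
        ring

theorem delta1_bounds :
    -0.657 < 1 - 2 * Real.log (1 + Real.sqrt (Real.exp 1)) +
        4 * ∫ u in (1 : ℝ)..Real.sqrt (Real.exp 1), Real.log u / (u + 1) ∧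
      1 - 2 * Real.log (1 + Real.sqrt (Real.exp 1)) +
        4 * (∫ u in (1 : ℝ)..Real.sqrt (Real.exp 1), Real.log u / (u + 1)) < -0.656 := by
  have hI := integral_log_div_add_one_eq 0 (1 / 2)
  rw [exp_zero, exp_half] at hI
  rw [hI]
  constructor <;>
    linarith [le_integral_log_one_add_exp, integral_log_one_add_exp_le, log_two_gt_d9,
      log_two_lt_d9]
end

section
/- Let p be an odd prime, let n1(p) < n2(p) < ... be the positive quadratic nonresidues modulo p, and let k ≥ 1 with 4k^2 < p. Then n_k(p) ≤ 2k·n1(p). In particular, the k-th nonresidue satisfies n_k(p) ≤ 2k·n1(p) whenever there are at least k nonresidues below p. -/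
theorem kth_nonresidue_bound (p : ℕ) [Fact p.Prime] (hp : p ≠ 2)
    (k : ℕ) (hk : 1 ≤ k) (hkp : 4 * k ^ 2 < p) :
    Nat.nth (fun n : ℕ => legendreSym p (n : ℤ) = -1) (k - 1) ≤
      2 * k * Nat.nth (fun n : ℕ => legendreSym p (n : ℤ) = -1) 0 := by
  classical
  set P : ℕ → Prop := fun n : ℕ => legendreSym p (n : ℤ) = -1 with hP
  -- P is infinite
  have hchar : ringChar (ZMod p) ≠ 2 := by
    rw [ZMod.ringChar_zmod_n]; exact hp
  obtain ⟨a, ha⟩ := quadraticChar_exists_neg_one hchar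
  have hppos : 0 < p := (Fact.out : p.Prime).pos
  have hinf : (setOf P).Infinite := by
    apply Set.infinite_of_injective_forall_mem (f := fun i : ℕ => a.val + i * p)
    · intro i j hij
      have : a.val + i * p = a.val + j * p := hij
      have := Nat.add_left_cancel this
      exact Nat.eq_of_mul_eq_mul_right hppos this
    · intro i
      show legendreSym p ((a.val + i * p : ℕ) : ℤ) = -1
      rw [legendreSym]
      have : (((a.val + i * p : ℕ) : ℤ) : ZMod p) = a := by
        push_cast
        simp [ZMod.natCast_self, ZMod.natCast_val, ZMod.cast_id]
      rw [this]; exact ha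
  set n1 := Nat.nth P 0 with hn1
  have hPn1 : P n1 := Nat.nth_mem_of_infinite hinf 0
  have hn1pos : 1 ≤ n1 := by
    by_contra h
    have h0 : n1 = 0 := by omega
    have : legendreSym p ((0 : ℕ) : ℤ) = -1 := h0 ▸ hPn1
    simp at this
  have h2kp : 2 * k < p := by
    calc 2 * k ≤ 4 * k ^ 2 := by nlinarith
    _ < p := hkp
  -- every m in [1, 2k] has nonzero legendre symbol
  have hnz : ∀ m ∈ Finset.Icc 1 (2 * k), legendreSym p (m : ℤ) ≠ 0 := by
    intro m hm hzero
    rw [Finset.mem_Icc] at hm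
    rw [legendreSym.eq_zero_iff] at hzero
    have : ((m : ℕ) : ZMod p) = 0 := by exact_mod_cast hzero
    rw [ZMod.natCast_eq_zero_iff] at this
    have := Nat.le_of_dvd (by omega) this
    omega
  set N := 2 * k * n1 with hN
  -- count argument
  have hcount : k ≤ Nat.count P (N + 1) := by
    rw [Nat.count_eq_card_filter_range]
    by_cases hc : k ≤ ((Finset.Icc 1 (2 * k)).filter P).card
    · refine le_trans hc (Finset.card_le_card ?_)
      intro m hm
      rw [Finset.mem_filter] at hm ⊢
      rw [Finset.mem_Icc] at hm
      refine ⟨Finset.mem_range.2 ?_, hm.2⟩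
      have : 2 * k ≤ N := by
        rw [hN]; nlinarith
      omega
    · push_neg at hc
      -- at least k residues in [1, 2k]
      have hsplit : ((Finset.Icc 1 (2 * k)).filter P).card
          + ((Finset.Icc 1 (2 * k)).filter (fun m => ¬ P m)).card = 2 * k := by
        rw [Finset.card_filter_add_card_filter_not]
        simp [Nat.card_Icc]
      have hB : k ≤ ((Finset.Icc 1 (2 * k)).filter (fun m => ¬ P m)).card := by omega
      have himg : ((Finset.Icc 1 (2 * k)).filter (fun m => ¬ P m)).image (fun m => n1 * m)
          ⊆ (Finset.range (N + 1)).filter P := by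
        intro x hx
        rw [Finset.mem_image] at hx
        obtain ⟨m, hm, rfl⟩ := hx
        rw [Finset.mem_filter] at hm
        have hmIcc := hm.1
        have hres : legendreSym p (m : ℤ) = 1 := by
          rcases legendreSym.eq_one_or_neg_one p
            (a := (m : ℤ)) (by
              intro h0
              exact hnz m hmIcc ((legendreSym.eq_zero_iff p _).2 h0)) with h1 | h1
          · exact h1
          · exact absurd h1 hm.2
        rw [Finset.mem_filter, Finset.mem_range]
        constructor
        · rw [Finset.mem_Icc] at hmIcc
          have : n1 * m ≤ N := by
            rw [hN]; calc n1 * m = m * n1 := mul_comm _ _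
              _ ≤ 2 * k * n1 := Nat.mul_le_mul_right _ hmIcc.2
          omega
        · show legendreSym p ((n1 * m : ℕ) : ℤ) = -1
          push_cast
          rw [legendreSym.mul]
          have h1 : legendreSym p ((n1 : ℕ) : ℤ) = -1 := hPn1
          rw [h1, hres]; ring
      have hinj : Set.InjOn (fun m => n1 * m)
          ((Finset.Icc 1 (2 * k)).filter (fun m => ¬ P m)) := by
        intro x _ y _ hxy
        exact Nat.eq_of_mul_eq_mul_left hn1pos hxy
      calc k ≤ ((Finset.Icc 1 (2 * k)).filter (fun m => ¬ P m)).card := hB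
        _ = (((Finset.Icc 1 (2 * k)).filter (fun m => ¬ P m)).image (fun m => n1 * m)).card :=
            (Finset.card_image_of_injOn hinj).symm
        _ ≤ ((Finset.range (N + 1)).filter P).card := Finset.card_le_card himg
  have : Nat.nth P (k - 1) < N + 1 := Nat.nth_lt_of_lt_count (by omega)
  omega
end
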